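/- arXiv:1903.08341 — 2 statements merged into one kernel-verified Lean document; each statement's English description precedes it below -/
import Mathlib

section
/- Fix constants α^{RT} > α^{DA} > 0, β^{DA} ∈ ℝ and a total demand D > 0. For each L ≥ 1, consider any load-side Cournot game with L loads whose positive demands sum to D. At its unique Nash equilibrium, the price spread equals λ^{DA} − λ^{RT} = −(α^{DA}/(L+1))·D, which is strictly negative for every L and tends to 0 as L → ∞; equivalently, the equilibrium total day-ahead load (1 − α^{DA}/((L+1)·α^{RT}))·D converges to the total load D as L → ∞. -/
/-!
A load's expenditure is a quadratic in its own day-ahead bid with leading coefficient `α^{RT}`,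
so a Nash equilibrium is characterised by first-order (KKT) conditions on each load's marginal
expenditure `α^{DA} d_l - α^{RT} (R + r_l)`, where `r_l` is its real-time load and `R` the total
real-time load. If `R ≤ 0`, these conditions would force every `r_l > 0`; hence `R > 0`, and
then `α^{RT} > α^{DA}` makes a zero bid unprofitable, so every load bids in the interior.
The marginals then all vanish, and summing them gives `α^{RT} (L + 1) R = α^{DA} D`.
-/

/-- Expenditure of player `l` in the load-side Cournot game: given demands `dem`, a
profile `p` of day-ahead participations (real-time participation of `k` is
`dem k - p k`), prices are `λ^{DA} = α^{DA}·(∑ k, p k) + β^{DA}` and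
`λ^{RT} = α^{RT}·(∑ k, dem k - p k) + λ^{DA}`, and the expenditure is
`λ^{DA}·p l + λ^{RT}·(dem l - p l)`. -/
noncomputable def expend {ι : Type*} [Fintype ι] (aDA aRT bDA : ℝ)
    (dem p : ι → ℝ) (l : ι) : ℝ :=
  (aDA * ∑ k, p k + bDA) * p l
    + (aRT * ∑ k, (dem k - p k) + (aDA * ∑ k, p k + bDA)) * (dem l - p l)

/-- Nash equilibrium of the load-side Cournot game. -/
def IsNash {ι : Type*} [Fintype ι] [DecidableEq ι] (aDA aRT bDA : ℝ)
    (dem p : ι → ℝ) : Prop :=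
  (∀ k, 0 ≤ p k) ∧
    ∀ l : ι, ∀ y : ℝ, 0 ≤ y →
      expend aDA aRT bDA dem p l ≤ expend aDA aRT bDA dem (Function.update p l y) l

open Finset Filter Topology Set

section FirstOrder

variable {f : ℝ → ℝ} {a m x : ℝ}

theorem nonneg_of_eventually_nonneg_mul_add (h : ∀ᶠ t in 𝓝[>] 0, 0 ≤ a * t + m) :
    0 ≤ m := by
  have hlim : Tendsto (fun t => a * t + m) (𝓝[>] 0) (𝓝 m) :=
    tendsto_nhdsWithin_of_tendsto_nhds <|
      ((continuous_const_mul a).add continuous_const).tendsto' 0 m (by simp)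
  exact ge_of_tendsto hlim h

theorem IsMinOn.nonneg_of_sub_eq (hmin : IsMinOn f (Ici 0) x) (hx : 0 ≤ x)
    (hf : ∀ y, f y - f x = (y - x) * (a * (y - x) + m)) : 0 ≤ m := by
  refine nonneg_of_eventually_nonneg_mul_add (a := a) <|
    eventually_nhdsWithin_of_forall fun t ht => ?_
  have hle := sub_nonneg.2 (isMinOn_iff.1 hmin _ (show 0 ≤ x + t by linarith [ht.out]))
  rw [hf, add_sub_cancel_left] at hle
  exact (mul_nonneg_iff_of_pos_left ht.out).1 hle

theorem IsMinOn.eq_zero_of_sub_eq (hmin : IsMinOn f (Ici 0) x) (hx : 0 < x)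
    (hf : ∀ y, f y - f x = (y - x) * (a * (y - x) + m)) : m = 0 := by
  refine le_antisymm ?_ (hmin.nonneg_of_sub_eq hx.le hf)
  refine neg_nonneg.1 (nonneg_of_eventually_nonneg_mul_add (a := a) ?_)
  filter_upwards [Ioo_mem_nhdsGT hx] with t ht
  have hle := sub_nonneg.2 (isMinOn_iff.1 hmin _ (show 0 ≤ x - t by linarith [ht.2]))
  rw [hf, sub_sub_cancel_left] at hle
  nlinarith [ht.1]

end FirstOrder

section Game

variable {ι : Type*} [Fintype ι] {aDA aRT bDA : ℝ} {dem p : ι → ℝ}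

/-- The derivative of `expend aDA aRT bDA dem p l` in the bid `p l`; with `R` the total and
`r_l` the own real-time load it reads `α^{DA} d_l - α^{RT} (R + r_l)`. -/
noncomputable def marginalExpend (aDA aRT : ℝ) (dem p : ι → ℝ) (l : ι) : ℝ :=
  aDA * dem l - aRT * (∑ k, (dem k - p k) + (dem l - p l))

variable [DecidableEq ι]

theorem sum_update_eq_sum_add (p : ι → ℝ) (l : ι) (y : ℝ) :
    ∑ k, Function.update p l y k = ∑ k, p k + (y - p l) := by
  rw [sum_update_of_mem (mem_univ l), sum_eq_add_sum_sdiff_singleton_of_mem (mem_univ l) p]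
  ring

theorem expend_update_sub_expend (aDA aRT bDA : ℝ) (dem p : ι → ℝ) (l : ι) (y : ℝ) :
    expend aDA aRT bDA dem (Function.update p l y) l - expend aDA aRT bDA dem p l
      = (y - p l) * (aRT * (y - p l) + marginalExpend aDA aRT dem p l) := by
  simp only [expend, marginalExpend, sum_sub_distrib, sum_update_eq_sum_add,
    Function.update_self]
  ring

namespace IsNash

theorem isMinOn (h : IsNash aDA aRT bDA dem p) (l : ι) :
    IsMinOn (fun y => expend aDA aRT bDA dem (Function.update p l y) l) (Ici 0) (p l) :=
  isMinOn_iff.2 fun y hy => by simpa only [Function.update_eq_self] using h.2 l y hy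

theorem marginalExpend_nonneg (h : IsNash aDA aRT bDA dem p) (l : ι) :
    0 ≤ marginalExpend aDA aRT dem p l :=
  (h.isMinOn l).nonneg_of_sub_eq (h.1 l) fun y => by
    simpa only [Function.update_eq_self] using expend_update_sub_expend aDA aRT bDA dem p l y

theorem marginalExpend_eq_zero (h : IsNash aDA aRT bDA dem p) {l : ι} (hl : 0 < p l) :
    marginalExpend aDA aRT dem p l = 0 :=
  (h.isMinOn l).eq_zero_of_sub_eq hl fun y => by
    simpa only [Function.update_eq_self] using expend_update_sub_expend aDA aRT bDA dem p l y

theorem sum_sub_pos [Nonempty ι] (h : IsNash aDA aRT bDA dem p) (hDA : 0 < aDA)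
    (hRT : 0 < aRT) (hdem : ∀ k, 0 < dem k) : 0 < ∑ k, (dem k - p k) := by
  by_contra! hR
  have hr : ∀ k, 0 < dem k - p k := by
    intro k
    rcases (h.1 k).eq_or_lt with hk | hk
    · rw [← hk, sub_zero]
      exact hdem k
    · have hm := h.marginalExpend_eq_zero hk
      rw [marginalExpend] at hm
      nlinarith [hdem k]
  exact hR.not_gt (sum_pos (fun k _ => hr k) univ_nonempty)

theorem pos [Nonempty ι] (h : IsNash aDA aRT bDA dem p) (hDA : 0 < aDA) (hlt : aDA < aRT)
    (hdem : ∀ k, 0 < dem k) (l : ι) : 0 < p l := by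
  have hR := h.sum_sub_pos hDA (hDA.trans hlt) hdem
  refine (h.1 l).lt_of_ne fun hl => ?_
  have hm := h.marginalExpend_nonneg l
  rw [marginalExpend, ← hl, sub_zero] at hm
  nlinarith [hdem l]

theorem card_add_one_mul_sum_sub [Nonempty ι] (h : IsNash aDA aRT bDA dem p) (hDA : 0 < aDA)
    (hlt : aDA < aRT) (hdem : ∀ k, 0 < dem k) :
    aRT * ((Fintype.card ι + 1) * ∑ k, (dem k - p k)) = aDA * ∑ k, dem k := by
  have hsum := sum_eq_zero (s := univ) fun l _ =>
    h.marginalExpend_eq_zero (h.pos hDA hlt hdem l)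
  simp only [marginalExpend, sum_sub_distrib, ← mul_sum, sum_add_distrib, sum_const, card_univ,
    nsmul_eq_mul] at hsum
  rw [sum_sub_distrib]
  linarith

end IsNash

end Game

/-- Vanishing market power as the number of loads grows. Fix
`α^{RT} > α^{DA} > 0`, `β^{DA} ∈ ℝ` and total demand `D > 0`. For every `L ≥ 1` and any
Cournot game with `L` positive demands summing to `D`, at its (unique) Nash equilibrium
the spread equals `λ^{DA} - λ^{RT} = -(α^{DA}/(L+1))·D < 0`, and the total day-ahead
load equals `(1 - α^{DA}/((L+1) α^{RT}))·D`; as `L → ∞` the spread tends to `0` and the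
total day-ahead load converges to `D`. -/
theorem cournot_spread_vanishes_with_competition
    (aDA aRT bDA D : ℝ) (h0 : 0 < aDA) (hlt : aDA < aRT) (hD : 0 < D) :
    (∀ L : ℕ, 1 ≤ L → ∀ dl : Fin L → ℝ, (∀ k, 0 < dl k) → (∑ l, dl l = D) →
      ∀ p : Fin L → ℝ, IsNash aDA aRT bDA dl p →
        (aDA * (∑ l, p l) + bDA)
            - (aRT * (∑ l, (dl l - p l)) + (aDA * (∑ l, p l) + bDA))
          = -(aDA / ((L : ℝ) + 1)) * D ∧
        -(aDA / ((L : ℝ) + 1)) * D < 0 ∧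
        ∑ l, p l = (1 - aDA / (((L : ℝ) + 1) * aRT)) * D) ∧
    Filter.Tendsto (fun L : ℕ => -(aDA / ((L : ℝ) + 1)) * D)
      Filter.atTop (nhds 0) ∧
    Filter.Tendsto (fun L : ℕ => (1 - aDA / (((L : ℝ) + 1) * aRT)) * D)
      Filter.atTop (nhds D) := by
  have hRT : 0 < aRT := h0.trans hlt
  have hden : Tendsto (fun L : ℕ => (L : ℝ) + 1) atTop atTop :=
    tendsto_atTop_add_const_right _ 1 tendsto_natCast_atTop_atTop
  refine ⟨fun L hL dl hdl hsum p hp => ?_, ?_, ?_⟩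
  · have : Nonempty (Fin L) := ⟨⟨0, hL⟩⟩
    have hkey := hp.card_add_one_mul_sum_sub h0 hlt hdl
    rw [Fintype.card_fin, hsum, sum_sub_distrib, hsum] at hkey
    have hL1 : (0 : ℝ) < L + 1 := by positivity
    have hspread : aRT * (D - ∑ l, p l) = aDA / ((L : ℝ) + 1) * D := by
      rw [div_mul_eq_mul_div, eq_div_iff hL1.ne']
      linear_combination hkey
    have hrt : D - ∑ l, p l = aDA / (((L : ℝ) + 1) * aRT) * D := by
      rw [div_mul_eq_mul_div, eq_div_iff (by positivity)]
      linear_combination hkey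
    rw [sum_sub_distrib, hsum]
    refine ⟨by linear_combination -hspread, ?_, by linear_combination -hrt⟩
    exact mul_neg_of_neg_of_pos (neg_neg_of_pos (div_pos h0 hL1)) hD
  · simpa using (tendsto_const_nhds.div_atTop hden).neg.mul_const D
  · simpa using
      ((tendsto_const_nhds.div_atTop (hden.atTop_mul_const hRT)).const_sub 1).mul_const D
end

section
/- In the load-side Cournot game with virtual bidders — L ≥ 1 real loads with demands d_l > 0 and V ≥ 1 virtual bidders with demand 0, with constants α^{RT} > α^{DA} > 0, β^{DA} ∈ ℝ — there exists a unique Nash equilibrium, and in it every virtual bidder v bids d_v^{DA*} = (α^{DA}/((L+V+1)·α^{RT}))·Σ_{l=1}^{L} d_l and d_v^{RT*} = −(α^{DA}/((L+V+1)·α^{RT}))·Σ_{l=1}^{L} d_l; in particular d_v^{DA*} > 0 (a decrement bid). -/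
lemma sum_update {ι : Type*} [Fintype ι] [DecidableEq ι] (p : ι → ℝ) (l : ι) (y : ℝ) :
    ∑ k, Function.update p l y k = ∑ k, p k + (y - p l) := by
  rw [Finset.sum_update_of_mem (Finset.mem_univ l),
    Finset.sum_sdiff_eq_sub (Finset.singleton_subset_iff.mpr (Finset.mem_univ l))]
  simp; ring

lemma expend_update {ι : Type*} [Fintype ι] [DecidableEq ι] (aDA aRT bDA : ℝ)
    (dem p : ι → ℝ) (l : ι) (y : ℝ) :
    expend aDA aRT bDA dem (Function.update p l y) l
      = expend aDA aRT bDA dem p l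
        + aRT * (y - p l)^2
        + (aRT * p l - aRT * (∑ k, (dem k - p k)) + (aDA - aRT) * dem l) * (y - p l) := by
  have h2 : ∑ k, (dem k - Function.update p l y k)
      = (∑ k, (dem k - p k)) - (y - p l) := by
    rw [Finset.sum_sub_distrib, Finset.sum_sub_distrib, sum_update]; ring
  unfold expend
  rw [h2, sum_update, Function.update_self]
  ring

lemma isNash_iff {ι : Type*} [Fintype ι] [DecidableEq ι] (aDA aRT bDA : ℝ)
    (haRT : 0 < aRT) (dem p : ι → ℝ) :
    IsNash aDA aRT bDA dem p ↔
      (∀ k, 0 ≤ p k) ∧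
      ∀ l, 0 ≤ aRT * p l - aRT * (∑ k, (dem k - p k)) + (aDA - aRT) * dem l ∧
        p l * (aRT * p l - aRT * (∑ k, (dem k - p k)) + (aDA - aRT) * dem l) = 0 := by
  constructor
  · rintro ⟨hpos, hmin⟩
    refine ⟨hpos, fun l => ?_⟩
    set G := aRT * p l - aRT * (∑ k, (dem k - p k)) + (aDA - aRT) * dem l with hGdef
    have key : ∀ y, 0 ≤ y → 0 ≤ aRT * (y - p l)^2 + G * (y - p l) := by
      intro y hy
      have := hmin l y hy
      rw [expend_update, ← hGdef] at this
      linarith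
    have hG : 0 ≤ G := by
      by_contra hneg
      push_neg at hneg
      have ht : 0 < -G / (2 * aRT) := div_pos (by linarith) (by linarith)
      have hk := key (p l + (-G / (2 * aRT))) (by linarith [hpos l])
      have hs : p l + -G / (2 * aRT) - p l = -G / (2 * aRT) := by ring
      rw [hs] at hk
      have h5 : aRT * (-G / (2 * aRT))^2 = (-G/2) * (-G / (2 * aRT)) := by
        field_simp
      nlinarith [mul_pos ht ht]
    refine ⟨hG, ?_⟩
    rcases eq_or_lt_of_le (hpos l) with h0 | h0
    · rw [← h0]; ring
    rcases eq_or_lt_of_le hG with hg0 | hg0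
    · rw [← hg0]; ring
    exfalso
    rcases le_or_gt (p l) (G / (2 * aRT)) with hcase | hcase
    · have hk := key 0 le_rfl
      have hs : (0:ℝ) - p l = -(p l) := by ring
      rw [hs] at hk
      -- 0 ≤ aRT * pl^2 - G * pl, but aRT * pl ≤ G/2 < G
      have h6 : aRT * p l ≤ G / 2 := by
        have := mul_le_mul_of_nonneg_left hcase haRT.le
        have h7 : aRT * (G / (2 * aRT)) = G / 2 := by field_simp
        linarith
      nlinarith
    · have ht : 0 < G / (2 * aRT) := div_pos hg0 (by linarith)
      have hk := key (p l - G / (2 * aRT)) (by linarith)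
      have hs : p l - G / (2 * aRT) - p l = -(G / (2 * aRT)) := by ring
      rw [hs] at hk
      have h5 : aRT * (-(G / (2 * aRT)))^2 = (G/2) * (G / (2 * aRT)) := by
        field_simp
      nlinarith [mul_pos ht ht]
  · rintro ⟨hpos, hfoc⟩
    refine ⟨hpos, fun l y hy => ?_⟩
    obtain ⟨hG, hc⟩ := hfoc l
    rw [expend_update]
    nlinarith [mul_nonneg haRT.le (sq_nonneg (y - p l)), mul_nonneg hG hy]

/-- Cournot game with virtual bidders. With `L ≥ 1` real loads of demands
`d_l > 0` and `V ≥ 1` virtual bidders of demand `0` (players indexed by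
`Fin L ⊕ Fin V`, demand `Sum.elim dl 0`), and `α^{RT} > α^{DA} > 0`, `β^{DA} ∈ ℝ`,
there exists a unique Nash equilibrium; in it, every virtual bidder `v` bids
`d_v^{DA*} = (α^{DA}/((L+V+1) α^{RT})) ∑_l d_l > 0` (a decrement bid), with real-time
position `d_v^{RT*} = -(α^{DA}/((L+V+1) α^{RT})) ∑_l d_l`. -/
theorem cournot_virtual_bidding_unique_equilibrium
    (L V : ℕ) (hL : 1 ≤ L) (hV : 1 ≤ V)
    (aDA aRT bDA : ℝ) (h0 : 0 < aDA) (hlt : aDA < aRT)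
    (dl : Fin L → ℝ) (hdl : ∀ k, 0 < dl k)
    (dem : Fin L ⊕ Fin V → ℝ)
    (hdem : dem = Sum.elim dl (fun _ => (0 : ℝ))) :
    (∃! p : Fin L ⊕ Fin V → ℝ, IsNash aDA aRT bDA dem p) ∧
    (∀ p : Fin L ⊕ Fin V → ℝ, IsNash aDA aRT bDA dem p →
      ∀ v : Fin V,
        p (Sum.inr v) = aDA / (((L : ℝ) + (V : ℝ) + 1) * aRT) * ∑ l, dl l ∧
        dem (Sum.inr v) - p (Sum.inr v)
          = -(aDA / (((L : ℝ) + (V : ℝ) + 1) * aRT) * ∑ l, dl l) ∧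
        0 < p (Sum.inr v)) := by
  have haRT : 0 < aRT := lt_trans h0 hlt
  have haRT' : aRT ≠ 0 := ne_of_gt haRT
  have hNpos : (0:ℝ) < (L : ℝ) + (V : ℝ) + 1 := by positivity
  have hNne : ((L : ℝ) + (V : ℝ) + 1) ≠ 0 := ne_of_gt hNpos
  set D : ℝ := ∑ l, dl l with hDdef
  have hD : 0 < D := by
    apply Finset.sum_pos (fun k _ => hdl k)
    exact Finset.univ_nonempty_iff.mpr ⟨⟨0, hL⟩⟩
  have hdemnn : ∀ k, 0 ≤ dem k := by
    intro k; rw [hdem]; rcases k with k | k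
    · exact (hdl k).le
    · exact le_rfl
  have hsumdem : ∑ k, dem k = D := by
    rw [hdem, Fintype.sum_sum_type]; simp [hDdef]
  set Tstar : ℝ := aDA * D / (((L : ℝ) + (V : ℝ) + 1) * aRT) with hTstardef
  have hTstar : 0 < Tstar := div_pos (mul_pos h0 hD) (mul_pos hNpos haRT)
  set c : ℝ := (aRT - aDA) / aRT with hcdef
  have hc0 : 0 ≤ c := div_nonneg (by linarith) haRT.le
  have hc1 : c < 1 := by rw [hcdef, div_lt_one haRT]; linarith
  have hcRT : aRT * c = aRT - aDA := by rw [hcdef]; field_simp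
  set q : Fin L ⊕ Fin V → ℝ := fun k => Tstar + c * dem k with hqdef
  have hsumq : ∑ k, q k = ((L : ℝ) + (V : ℝ)) * Tstar + c * D := by
    rw [hqdef]
    rw [Finset.sum_add_distrib, Finset.sum_const, ← Finset.mul_sum, hsumdem,
      Finset.card_univ, Fintype.card_sum, Fintype.card_fin, Fintype.card_fin,
      nsmul_eq_mul, Nat.cast_add]
  have hTq : ∑ k, (dem k - q k) = Tstar := by
    rw [Finset.sum_sub_distrib, hsumdem, hsumq, hTstardef, hcdef]
    field_simp
    ring
  have hqNash : IsNash aDA aRT bDA dem q := by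
    rw [isNash_iff aDA aRT bDA haRT]
    constructor
    · intro k
      have := hdemnn k
      have : 0 ≤ c * dem k := mul_nonneg hc0 this
      simp only [hqdef]
      linarith
    · intro l
      rw [hTq]
      have hGq : aRT * q l - aRT * Tstar + (aDA - aRT) * dem l = 0 := by
        simp only [hqdef]
        linear_combination dem l * hcRT
      rw [hGq]
      exact ⟨le_rfl, by ring⟩
  have huniq : ∀ p : Fin L ⊕ Fin V → ℝ, IsNash aDA aRT bDA dem p → p = q := by
    intro p hp
    rw [isNash_iff aDA aRT bDA haRT] at hp
    obtain ⟨hpos, hfoc⟩ := hp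
    set T : ℝ := ∑ k, (dem k - p k) with hTdef
    have hsump : ∑ k, p k = D - T := by
      rw [hTdef, Finset.sum_sub_distrib, hsumdem]; ring
    have hTpos : 0 < T := by
      by_contra hT
      push_neg at hT
      have hub : ∀ k, p k ≤ c * dem k := by
        intro k
        obtain ⟨hG, hcomp⟩ := hfoc k
        rcases eq_or_lt_of_le (hpos k) with h0' | h0'
        · rw [← h0']; exact mul_nonneg hc0 (hdemnn k)
        · have hG0 : aRT * p k - aRT * T + (aDA - aRT) * dem k = 0 := by
            rcases mul_eq_zero.mp hcomp with h | h
            · exact absurd h (ne_of_gt h0')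
            · exact h
          have h1 : aRT * p k ≤ (aRT - aDA) * dem k := by
            nlinarith [mul_nonneg haRT.le (neg_nonneg.mpr hT)]
          have h2 : aRT * (c * dem k) = (aRT - aDA) * dem k := by
            rw [← mul_assoc, hcRT]
          exact le_of_mul_le_mul_left (by linarith) haRT
      have hsle : ∑ k, p k ≤ c * D := by
        calc ∑ k, p k ≤ ∑ k, c * dem k := Finset.sum_le_sum (fun k _ => hub k)
        _ = c * D := by rw [← Finset.mul_sum, hsumdem]
      nlinarith [mul_pos (show (0:ℝ) < 1 - c by linarith) hD]
    have hppos : ∀ k, 0 < p k := by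
      intro k
      rcases eq_or_lt_of_le (hpos k) with h0' | h0'
      · exfalso
        obtain ⟨hG, _⟩ := hfoc k
        rw [← h0'] at hG
        nlinarith [mul_pos haRT hTpos, mul_nonneg (show (0:ℝ) ≤ aRT - aDA by linarith) (hdemnn k)]
      · exact h0'
    have hGeq : ∀ k, aRT * p k = aRT * T + (aRT - aDA) * dem k := by
      intro k
      obtain ⟨hG, hcomp⟩ := hfoc k
      rcases mul_eq_zero.mp hcomp with h | h
      · exact absurd h (ne_of_gt (hppos k))
      · linarith
    have hsumeq : aRT * (D - T) = ((L : ℝ) + (V : ℝ)) * (aRT * T) + (aRT - aDA) * D := by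
      have : ∑ k, (aRT * p k) = ∑ k, (aRT * T + (aRT - aDA) * dem k) :=
        Finset.sum_congr rfl (fun k _ => hGeq k)
      rw [← Finset.mul_sum, hsump, Finset.sum_add_distrib, Finset.sum_const,
        ← Finset.mul_sum, hsumdem, Finset.card_univ, Fintype.card_sum,
        Fintype.card_fin, Fintype.card_fin, nsmul_eq_mul, Nat.cast_add] at this
      exact this
    have hTT : T = Tstar := by
      rw [hTstardef, eq_div_iff (by positivity)]
      linear_combination -hsumeq
    funext k
    have h1 := hGeq k
    rw [hTT] at h1
    have h2 : aRT * q k = aRT * Tstar + (aRT - aDA) * dem k := by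
      simp only [hqdef]
      linear_combination dem k * hcRT
    exact mul_left_cancel₀ haRT' (by linarith)
  have hqv : ∀ v : Fin V, q (Sum.inr v) = aDA / (((L : ℝ) + (V : ℝ) + 1) * aRT) * D := by
    intro v
    simp only [hqdef, hdem, Sum.elim_inr, mul_zero, add_zero, hTstardef]
    ring
  refine ⟨⟨q, hqNash, huniq⟩, ?_⟩
  intro p hp v
  have hpq := huniq p hp
  rw [hpq, hqv v]
  refine ⟨rfl, ?_, ?_⟩
  · rw [hdem]; simp
  · rw [← hqv v, hqdef]
    simp only [hdem, Sum.elim_inr, mul_zero, add_zero]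
    exact hTstar
end
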